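/- arXiv:1210.4577 — 2 statements merged into one kernel-verified Lean document; each statement's English description precedes it below -/
import Mathlib

section
/- Suppose a graph G' on vertex set [n] is obtained from a graph G on [n] by deleting some edges. Then for every k ≥ 0 and every subset S ⊆ [n], the number of elements of word length k in the right-angled Coxeter group W_{G'} (with respect to the standard generators) is at least the number of elements of word length k in W_G. Consequently the radius of convergence of the growth series of W_{G'} is at most that of W_G. -/
/-- The defining relators of the right-angled Coxeter group of a graph `G` on `[n]`:
`s_i² = 1` for each `i`, and `(s_i s_j)² = 1` whenever `{i,j}` is an edge of `G`. -/
def racgRels {n : ℕ} (G : SimpleGraph (Fin n)) : Set (FreeGroup (Fin n)) :=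
  {r | (∃ i, r = (FreeGroup.of i) ^ 2) ∨
    ∃ i j, G.Adj i j ∧ r = (FreeGroup.of i * FreeGroup.of j) ^ 2}

/-- The right-angled Coxeter group `W_G` of a graph `G`. -/
def RACG {n : ℕ} (G : SimpleGraph (Fin n)) : Type := PresentedGroup (racgRels G)

instance {n : ℕ} (G : SimpleGraph (Fin n)) : Group (RACG G) := by
  unfold RACG; infer_instance

/-- The standard generator `s_i` of `W_G`. -/
def racgGen {n : ℕ} (G : SimpleGraph (Fin n)) (i : Fin n) : RACG G :=
  PresentedGroup.of i

/-- The set of elements of `W_G` that have word length exactly `k` with respect to the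
standard generators, using only letters from the subset `S ⊆ [n]`: elements `w`
expressible as a product of `k` generators with indices in `S`, and not expressible
as any shorter such product. -/
def lengthKElems {n : ℕ} (G : SimpleGraph (Fin n)) (S : Finset (Fin n)) (k : ℕ) :
    Set (RACG G) :=
  {w | (∃ l : List (Fin n), (∀ i ∈ l, i ∈ S) ∧ l.length = k ∧
          (l.map (racgGen G)).prod = w) ∧
       ∀ l : List (Fin n), (∀ i ∈ l, i ∈ S) → (l.map (racgGen G)).prod = w →
          k ≤ l.length}

/-!
Deleting edges only removes relations, so the identity on generators induces a surjection
`W_{G'} → W_G` sending each word to the same word. A word of length `k` representing an element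
of length `k` in `W_G` therefore represents an element of length `k` in `W_{G'}` (a shorter word
for it would map to a shorter word in `W_G`), so the length-`k` sphere of `W_G` is the image of a
subset of that of `W_{G'}`.
-/

section RightAngledCoxeter

variable {n : ℕ} {G G' : SimpleGraph (Fin n)}

lemma racgRels_mono (h : G' ≤ G) : racgRels G' ⊆ racgRels G := by
  rintro r (hsq | ⟨i, j, hij, rfl⟩)
  · exact Or.inl hsq
  · exact Or.inr ⟨i, j, h hij, rfl⟩

def racgMap (h : G' ≤ G) : RACG G' →* RACG G :=
  QuotientGroup.map _ _ (MonoidHom.id _) (Subgroup.normalClosure_mono (racgRels_mono h))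

lemma racgMap_prod_map_racgGen (h : G' ≤ G) (l : List (Fin n)) :
    racgMap h (l.map (racgGen G')).prod = (l.map (racgGen G)).prod := by
  rw [map_list_prod, List.map_map]
  rfl

lemma lengthKElems_finite (G : SimpleGraph (Fin n)) (S : Finset (Fin n)) (k : ℕ) :
    (lengthKElems G S k).Finite := by
  refine ((List.finite_length_eq (Fin n) k).image fun l => (l.map (racgGen G)).prod).subset ?_
  rintro w ⟨⟨l, -, hlen, hprod⟩, -⟩
  exact ⟨l, hlen, hprod⟩

lemma lengthKElems_subset_image_racgMap (h : G' ≤ G) (S : Finset (Fin n)) (k : ℕ) :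
    lengthKElems G S k ⊆ racgMap h '' lengthKElems G' S k := by
  rintro w ⟨⟨l, hS, hlen, rfl⟩, hmin⟩
  refine ⟨(l.map (racgGen G')).prod, ⟨⟨l, hS, hlen, rfl⟩, fun l' hS' hprod' => ?_⟩,
    racgMap_prod_map_racgGen h l⟩
  refine hmin l' hS' ?_
  rw [← racgMap_prod_map_racgGen h, ← racgMap_prod_map_racgGen h, hprod']

lemma card_lengthKElems_le_of_le (h : G' ≤ G) (S : Finset (Fin n)) (k : ℕ) :
    Nat.card (lengthKElems G S k) ≤ Nat.card (lengthKElems G' S k) := by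
  have hfin := lengthKElems_finite G' S k
  rw [Nat.card_coe_set_eq, Nat.card_coe_set_eq]
  calc (lengthKElems G S k).ncard
      ≤ (racgMap h '' lengthKElems G' S k).ncard :=
        Set.ncard_le_ncard (lengthKElems_subset_image_racgMap h S k) (hfin.image _)
    _ ≤ (lengthKElems G' S k).ncard := Set.ncard_image_le hfin

end RightAngledCoxeter

/-- Suppose `G'` is obtained from `G` (both graphs on `[n]`) by deleting
some edges, i.e. `G' ≤ G`.  Then for every `k ≥ 0` and every `S ⊆ [n]`, the number of
elements of word length `k` (with letters in `S`) in `W_{G'}` is at least the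
corresponding number for `W_G`.  Consequently, the radius of convergence of the growth
series of `W_{G'}` is at most that of `W_G`: for every `t ≥ 0`, if
`∑_k a_k(G') t^k` converges then so does `∑_k a_k(G) t^k`. -/
theorem stmt5 {n : ℕ} (G G' : SimpleGraph (Fin n)) (hdel : G' ≤ G) :
    (∀ (k : ℕ) (S : Finset (Fin n)),
        Nat.card (lengthKElems G S k) ≤ Nat.card (lengthKElems G' S k)) ∧
      ∀ t : ℝ, 0 ≤ t →
        Summable (fun k : ℕ => (Nat.card (lengthKElems G' Finset.univ k) : ℝ) * t ^ k) →
        Summable (fun k : ℕ => (Nat.card (lengthKElems G Finset.univ k) : ℝ) * t ^ k) := by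
  refine ⟨fun k S => card_lengthKElems_le_of_le hdel S k, fun t ht hsum => ?_⟩
  refine hsum.of_nonneg_of_le (fun k => by positivity) fun k => ?_
  gcongr
  exact card_lengthKElems_le_of_le hdel _ k
end

section
/- For t_1,...,t_n ∈ [0,∞) with Σ_{i=1}^n t_i/(1+t_i) < 1, the series Σ_{k≥0} a_k(t), where a_k(t) = Σ over words of length k in the free product (Z/2)^{*n} of the product of the t_i over the letters used (i.e., the multivariable growth series of the free product of n copies of Z/2), converges, and its sum equals 1/(1 - Σ_{i=1}^n t_i/(1+t_i)). -/
/-- Reduced words in the free product `(ℤ/2)^{*n}`: sequences of letters from `[n]`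
with no two consecutive letters equal.  These correspond bijectively to group
elements. -/
def ReducedWord (n : ℕ) : Type := {l : List (Fin n) // l.Chain' (· ≠ ·)}

/-- The monomial `t_{i_1} ⋯ t_{i_k}` attached to a reduced word `s_{i_1} ⋯ s_{i_k}`. -/
def wordMonomial {n : ℕ} (t : Fin n → ℝ) (l : ReducedWord n) : ℝ :=
  (l.1.map t).prod

/-!
Let `B i` be the part of the growth series coming from reduced words that begin with `s i`.
Splitting off the first letter gives `B i = t i * (1 + ∑_{j ≠ i} B j)`; once the `B i` are
known to be finite, this linear system forces `B i = t i / (1 + t i) * (1 + ∑ j, B j)`, so the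
whole series `1 + ∑ j, B j` equals `1 / (1 - ∑ i, t i / (1 + t i))`.
Finiteness comes from truncating by word length: the truncations obey the same recursion from
length `k` to `k + 1`, so by induction they stay below every nonnegative supersolution of the
system, e.g. the explicit solution `t i / (1 + t i) / (1 - ∑ j, t j / (1 + t j))`.
Everything is done in `ℝ≥0∞`, where series of nonnegative terms can be rearranged freely.
-/

open scoped ENNReal
open Finset

theorem ENNReal.tsum_list_eq_add_sum_tsum_cons {α : Type*} [Fintype α] (f : List α → ℝ≥0∞) :
    ∑' l, f l = f [] + ∑ i, ∑' l, f (i :: l) := by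
  classical
  have hcons : Function.Injective (fun p : α × List α => p.1 :: p.2) := fun p q h => by
    simpa [Prod.ext_iff] using h
  rw [ENNReal.tsum_eq_add_tsum_ite [], ← hcons.tsum_eq]
  · simp only [reduceCtorEq, if_false]
    rw [ENNReal.tsum_prod (f := fun i l => f (i :: l)), tsum_fintype (L := .unconditional _)]
  · rintro (_ | ⟨i, l⟩) hl
    · simp at hl
    · exact ⟨(i, l), rfl⟩

section FixedPoint

variable {α : Type*} [Fintype α] [DecidableEq α] {t : α → ℝ}

lemma mul_one_add_sum_erase_div_one_sub (ht0 : ∀ i, 0 ≤ t i)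
    (hu : ∑ i, t i / (1 + t i) ≠ 1) (i : α) :
    t i * (1 + ∑ j ∈ univ.erase i, t j / (1 + t j) / (1 - ∑ j, t j / (1 + t j))) =
      t i / (1 + t i) / (1 - ∑ j, t j / (1 + t j)) := by
  have h1t : 1 + t i ≠ 0 := by linarith [ht0 i]
  have hu' : 1 - ∑ j, t j / (1 + t j) ≠ 0 := sub_ne_zero.2 hu.symm
  rw [← sum_div, sum_erase_eq_sub (mem_univ i)]
  field_simp
  ring

lemma one_add_sum_eq_of_eq_mul (ht0 : ∀ i, 0 ≤ t i)
    (hu : ∑ i, t i / (1 + t i) ≠ 1) {b : α → ℝ}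
    (hb : ∀ i, b i = t i * (1 + ∑ j ∈ univ.erase i, b j)) :
    1 + ∑ i, b i = 1 / (1 - ∑ i, t i / (1 + t i)) := by
  have hbi : ∀ i, b i = t i / (1 + t i) * (1 + ∑ j, b j) := fun i => by
    have h1t : 1 + t i ≠ 0 := by linarith [ht0 i]
    have := hb i
    rw [sum_erase_eq_sub (mem_univ i)] at this
    field_simp
    linarith
  have hsum : ∑ i, b i = (∑ i, t i / (1 + t i)) * (1 + ∑ j, b j) := by
    rw [sum_mul]; exact sum_congr rfl fun i _ => hbi i
  rw [eq_div_iff (sub_ne_zero.2 hu.symm)]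
  linear_combination hsum

end FixedPoint

namespace ReducedWord

variable {α : Type*}

open Classical in
noncomputable def truncWeight (τ : α → ℝ≥0∞) (k : ℕ∞) (l : List α) : ℝ≥0∞ :=
  if (l.length : ℕ∞) ≤ k ∧ l.IsChain (· ≠ ·) then (l.map τ).prod else 0

noncomputable def headSum (τ : α → ℝ≥0∞) (k : ℕ∞) (i : α) : ℝ≥0∞ :=
  ∑' l, truncWeight τ k (i :: l)

variable (τ : α → ℝ≥0∞)

@[simp] lemma truncWeight_nil (k : ℕ∞) : truncWeight τ k [] = 1 := by
  simp [truncWeight]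

lemma truncWeight_of_length_le {k : ℕ∞} {l : List α} (hl : (l.length : ℕ∞) ≤ k) :
    truncWeight τ ⊤ l = truncWeight τ k l := by
  classical
  unfold truncWeight
  exact if_congr (by simp [hl]) rfl rfl

lemma truncWeight_singleton (k : ℕ∞) (i : α) : truncWeight τ (k + 1) [i] = τ i := by
  simp [truncWeight]

lemma truncWeight_cons_cons [DecidableEq α] (k : ℕ∞) (i j : α) (l : List α) :
    truncWeight τ (k + 1) (i :: j :: l) =
      if i = j then 0 else τ i * truncWeight τ k (j :: l) := by
  by_cases h : i = j <;> simp [truncWeight, h, ite_and]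

lemma headSum_zero (i : α) : headSum τ 0 i = 0 := by
  simp [headSum, truncWeight]

variable [Fintype α]

lemma tsum_truncWeight_top : ∑' l, truncWeight τ ⊤ l = 1 + ∑ i, headSum τ ⊤ i := by
  rw [ENNReal.tsum_list_eq_add_sum_tsum_cons, truncWeight_nil]; rfl

variable [DecidableEq α]

lemma headSum_add_one (k : ℕ∞) (i : α) :
    headSum τ (k + 1) i = τ i * (1 + ∑ j ∈ univ.erase i, headSum τ k j) := by
  rw [headSum, ENNReal.tsum_list_eq_add_sum_tsum_cons]
  simp only [truncWeight_singleton, truncWeight_cons_cons]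
  have hterm : ∀ j, ∑' l, (if i = j then 0 else τ i * truncWeight τ k (j :: l)) =
      τ i * if j ≠ i then headSum τ k j else 0 := by
    intro j
    by_cases h : i = j
    · simp [h]
    · simp [h, Ne.symm h, headSum, ENNReal.tsum_mul_left]
  rw [sum_congr rfl fun j _ => hterm j, ← mul_sum, ← sum_filter, filter_ne', mul_add, mul_one]

lemma headSum_top (i : α) :
    headSum τ ⊤ i = τ i * (1 + ∑ j ∈ univ.erase i, headSum τ ⊤ j) := by
  simpa using headSum_add_one τ ⊤ i

variable {τ}

lemma headSum_le {c : α → ℝ≥0∞} (hc : ∀ i, τ i * (1 + ∑ j ∈ univ.erase i, c j) ≤ c i)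
    (k : ℕ) (i : α) : headSum τ k i ≤ c i := by
  induction k generalizing i with
  | zero => simp [headSum_zero]
  | succ k ih =>
    rw [Nat.cast_succ, headSum_add_one]
    exact le_trans (by gcongr with j; exact ih j) (hc i)

lemma headSum_top_le {c : α → ℝ≥0∞} (hc : ∀ i, τ i * (1 + ∑ j ∈ univ.erase i, c j) ≤ c i)
    (i : α) : headSum τ ⊤ i ≤ c i := by
  rw [headSum, ENNReal.tsum_eq_iSup_sum]
  refine iSup_le fun s => ?_
  set k := s.sup List.length + 1
  calc ∑ l ∈ s, truncWeight τ ⊤ (i :: l) = ∑ l ∈ s, truncWeight τ k (i :: l) :=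
        sum_congr rfl fun l hl => truncWeight_of_length_le τ (by simpa [k] using le_sup hl)
    _ ≤ headSum τ k i := ENNReal.sum_le_tsum s
    _ ≤ c i := headSum_le hc k i

lemma tsum_truncWeight_top_ofReal {t : α → ℝ} (ht0 : ∀ i, 0 ≤ t i)
    (ht : ∑ i, t i / (1 + t i) < 1) :
    ∑' l, truncWeight (fun i => ENNReal.ofReal (t i)) ⊤ l =
      ENNReal.ofReal (1 / (1 - ∑ i, t i / (1 + t i))) := by
  set τ : α → ℝ≥0∞ := fun i => ENNReal.ofReal (t i)
  set c : α → ℝ := fun i => t i / (1 + t i) / (1 - ∑ j, t j / (1 + t j))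
  have hc0 : ∀ i, 0 ≤ c i := fun i => div_nonneg (div_nonneg (ht0 i) (by linarith [ht0 i]))
    (by linarith)
  have hfixed :
      ∀ i, τ i * (1 + ∑ j ∈ univ.erase i, ENNReal.ofReal (c j)) ≤ ENNReal.ofReal (c i) := by
    intro i
    rw [← ENNReal.ofReal_sum_of_nonneg fun j _ => hc0 j, ← ENNReal.ofReal_one,
      ← ENNReal.ofReal_add zero_le_one (sum_nonneg fun j _ => hc0 j),
      ← ENNReal.ofReal_mul (ht0 i), mul_one_add_sum_erase_div_one_sub ht0 ht.ne i]
  have hfin : ∀ i, headSum τ ⊤ i ≠ ⊤ := fun i =>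
    ne_top_of_le_ne_top ENNReal.ofReal_ne_top (headSum_top_le hfixed i)
  have hb : ∀ i, (headSum τ ⊤ i).toReal =
      t i * (1 + ∑ j ∈ univ.erase i, (headSum τ ⊤ j).toReal) := by
    intro i
    conv_lhs => rw [headSum_top]
    rw [ENNReal.toReal_mul, ENNReal.toReal_add ENNReal.one_ne_top
      (ENNReal.sum_ne_top.2 fun j _ => hfin j), ENNReal.toReal_sum fun j _ => hfin j,
      ENNReal.toReal_one, ENNReal.toReal_ofReal (ht0 i)]
  rw [tsum_truncWeight_top, ← one_add_sum_eq_of_eq_mul ht0 ht.ne hb,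
    ENNReal.ofReal_add zero_le_one (sum_nonneg fun i _ => ENNReal.toReal_nonneg),
    ENNReal.ofReal_one, ENNReal.ofReal_sum_of_nonneg fun i _ => ENNReal.toReal_nonneg]
  simp only [ENNReal.ofReal_toReal (hfin _)]

end ReducedWord

open ReducedWord in
/-- For `t_1, …, t_n ∈ [0,∞)` with `∑ t_i/(1+t_i) < 1`, the multivariable
growth series of the free product of `n` copies of `ℤ/2` — the sum over all group
elements (i.e. over all reduced words) of the product of the `t_i` over the letters
used — converges, and its sum equals `1/(1 − ∑_{i=1}^n t_i/(1+t_i))`. -/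
theorem stmt7 (n : ℕ) (t : Fin n → ℝ) (ht0 : ∀ i, 0 ≤ t i)
    (ht : ∑ i, t i / (1 + t i) < 1) :
    Summable (wordMonomial t) ∧
      ∑' l : ReducedWord n, wordMonomial t l = 1 / (1 - ∑ i, t i / (1 + t i)) := by
  set F : List (Fin n) → ℝ≥0∞ := truncWeight (fun i => ENNReal.ofReal (t i)) ⊤
  have hterm : ∀ w : ReducedWord n, wordMonomial t w = (F w.1).toReal := fun w => by
    have hF : F w.1 = (w.1.map fun i => ENNReal.ofReal (t i)).prod := if_pos ⟨le_top, w.2⟩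
    rw [wordMonomial, hF]
    induction w.1 with
    | nil => simp
    | cons i l ih => simp [ih, ENNReal.toReal_ofReal (ht0 i)]
  have hreduced : ∑' w : ReducedWord n, F w.1 = ∑' l, F l := by
    refine Subtype.val_injective.tsum_eq fun l hl => ⟨⟨l, ?_⟩, rfl⟩
    by_contra h
    exact hl (if_neg fun hc => h hc.2)
  have hsum := tsum_truncWeight_top_ofReal ht0 ht
  have hfin : ∑' w : ReducedWord n, F w.1 ≠ ⊤ := by
    rw [hreduced, hsum]; exact ENNReal.ofReal_ne_top
  refine ⟨(ENNReal.summable_toReal hfin).congr fun w => (hterm w).symm, ?_⟩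
  rw [tsum_congr hterm, ← ENNReal.tsum_toReal_eq (ENNReal.ne_top_of_tsum_ne_top hfin), hreduced,
    hsum, ENNReal.toReal_ofReal (one_div_nonneg.2 (by linarith))]
end
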